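/- arXiv:2007.15298 — 2 statements merged into one kernel-verified Lean document; each statement's English description precedes it below -/
import Mathlib

section
/- Let k ∈ ℕ₀ and let ψ : ℝⁿ → ℝ be antisymmetric and of class C^{k+n(n−1)/2}. Then there exists a symmetric function χ : ℝⁿ → ℝ of class C^k such that ψ(x) = Δ(x)·χ(x) for all x ∈ ℝⁿ, where Δ(x₁,…,xₙ) := ∏_{1≤j<i≤n} (x_i − x_j). -/
/-!
An antisymmetric function vanishes on each hyperplane `x i = x j`, since the transposition of
`i` and `j` fixes such a point and has sign `-1`. A `C^(m+1)` function `f` vanishing on the kernel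
of a nonzero linear form `ℓ` factors as `ℓ • g` with `g` of class `C^m`: integrate the derivative
of `f` along a line transverse to the kernel (Hadamard's lemma). The quotient `g` still vanishes
on every other hyperplane, by continuity along a line inside that hyperplane, so the
`n(n-1)/2` linear factors of `Δ` are divided out one at a time, each costing one derivative.
Finally `Δ χ = ψ` forces `χ` to be symmetric where `Δ ≠ 0`, a dense set, hence everywhere.
-/

open Set Finset

universe u

section ParametricIntegral

-- `H` and `G` share a universe so that the induction below can replace `G` by `H →L[ℝ] G`.
variable {H G : Type u} [NormedAddCommGroup H] [NormedSpace ℝ H]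
  [NormedAddCommGroup G] [NormedSpace ℝ G]

theorem hasFDerivAt_parametric_intervalIntegral_of_contDiff {F : ℝ × H → G}
    (hF : ContDiff ℝ 1 F) (a b : ℝ) (x₀ : H) :
    HasFDerivAt (fun x => ∫ t in a..b, F (t, x))
      (∫ t in a..b, (fderiv ℝ F (t, x₀)).comp (ContinuousLinearMap.inr ℝ ℝ H)) x₀ := by
  set F' : ℝ × H → H →L[ℝ] G := fun p => (fderiv ℝ F p).comp (ContinuousLinearMap.inr ℝ ℝ H)
  have hF' : Continuous F' := (hF.continuous_fderiv one_ne_zero).clm_comp continuous_const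
  obtain ⟨C, hC⟩ := (isCompact_uIcc (a := a) (b := b)).exists_bound_of_continuousOn
    (hF'.comp (Continuous.prodMk_left x₀)).continuousOn
  have hbound : ∀ᶠ x in nhds x₀, ∀ t ∈ uIcc a b, ‖F' (t, x)‖ < C + 1 :=
    isCompact_uIcc.eventually_forall_of_forall_eventually fun t ht =>
      (hF'.comp continuous_swap).norm.continuousAt.eventually_lt continuousAt_const
        ((hC t ht).trans_lt (lt_add_one C))
  have : SecondCountableTopologyEither ℝ (H →L[ℝ] G) := secondCountableTopologyEither_of_left _ _
  refine intervalIntegral.hasFDerivAt_integral_of_dominated_of_fderiv_le (bound := fun _ => C + 1)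
    (F' := fun x t => F' (t, x)) hbound
    (.of_forall fun x => (hF.continuous.comp (by fun_prop)).aestronglyMeasurable)
    ((hF.continuous.comp (by fun_prop)).intervalIntegrable a b)
    (hF'.comp (by fun_prop)).aestronglyMeasurable
    (.of_forall fun t ht x hx => (hx t (uIoc_subset_uIcc ht)).le)
    intervalIntegrable_const (.of_forall fun t _ x _ => ?_)
  exact ((hF.differentiable one_ne_zero _).hasFDerivAt).comp x
    ((hasFDerivAt_const t x).prodMk (hasFDerivAt_id x))

theorem contDiff_parametric_intervalIntegral_of_contDiff {m : ℕ} {F : ℝ × H → G}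
    (hF : ContDiff ℝ m F) (a b : ℝ) : ContDiff ℝ m (fun x => ∫ t in a..b, F (t, x)) := by
  induction m generalizing G with
  | zero =>
    rw [Nat.cast_zero, contDiff_zero] at hF ⊢
    exact intervalIntegral.continuous_parametric_intervalIntegral_of_continuous'
      (by exact hF.comp continuous_swap) a b
  | succ m ih =>
    have hderiv := hasFDerivAt_parametric_intervalIntegral_of_contDiff
      (hF.of_le (by exact_mod_cast Nat.le_add_left 1 m)) a b
    rw [Nat.cast_succ, contDiff_succ_iff_fderiv] at hF ⊢
    refine ⟨fun x => (hderiv x).differentiableAt, by simp, ?_⟩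
    rw [funext fun x => (hderiv x).fderiv]
    exact ih (hF.2.2.clm_comp contDiff_const)

end ParametricIntegral

section Division

variable {E F : Type u} [NormedAddCommGroup E] [NormedSpace ℝ E]
  [NormedAddCommGroup F] [NormedSpace ℝ F]

theorem exists_contDiff_smul_of_eq_zero_of_apply_eq_zero [CompleteSpace F] {m : ℕ} {f : E → F}
    (hf : ContDiff ℝ (m + 1 : ℕ) f) {ℓ : E →L[ℝ] ℝ} (hℓ : ℓ ≠ 0)
    (hzero : ∀ x, ℓ x = 0 → f x = 0) :
    ∃ g : E → F, ContDiff ℝ m g ∧ ∀ x, f x = ℓ x • g x := by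
  obtain ⟨v, hv : ℓ v = 1⟩ := LinearMap.surjective (f := (ℓ : E →ₗ[ℝ] ℝ))
    (fun h => hℓ (ContinuousLinearMap.coe_injective h)) 1
  -- `γ (·, x)` runs along `v` from a zero of `ℓ` (at `t = 0`) to `x` (at `t = 1`).
  set γ : ℝ × E → E := fun p => p.2 + (p.1 - 1) • ℓ p.2 • v
  have hγ : ContDiff ℝ ⊤ γ := by fun_prop
  have hf' : ContDiff ℝ m (fderiv ℝ f) := hf.fderiv_right (by exact_mod_cast le_rfl)
  have hG : ContDiff ℝ m fun p => fderiv ℝ f (γ p) v :=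
    (hf'.comp (hγ.of_le le_top)).clm_apply contDiff_const
  refine ⟨fun x => ∫ t in (0 : ℝ)..1, fderiv ℝ f (γ (t, x)) v,
    contDiff_parametric_intervalIntegral_of_contDiff hG 0 1, fun x => ?_⟩
  have hderiv : ∀ t : ℝ, HasDerivAt (fun t => f (γ (t, x))) (ℓ x • fderiv ℝ f (γ (t, x)) v) t := by
    intro t
    have hline : HasDerivAt (fun t : ℝ => γ (t, x)) (ℓ x • v) t := by
      convert (((hasDerivAt_id' t).sub_const 1).smul_const (ℓ x • v)).const_add x using 1
      rw [one_smul]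
    have := ((hf.differentiable (by simp) _).hasFDerivAt).comp_hasDerivAt t hline
    rwa [map_smul] at this
  have hcont : Continuous fun t : ℝ => ℓ x • fderiv ℝ f (γ (t, x)) v :=
    continuous_const.smul (hG.continuous.comp (by fun_prop))
  have hFTC := intervalIntegral.integral_eq_sub_of_hasDerivAt (fun t _ => hderiv t)
    (hcont.intervalIntegrable 0 1)
  rw [intervalIntegral.integral_smul, hzero (γ (0, x)) (by simp [γ, hv])] at hFTC
  simpa [γ] using hFTC.symm

end Division

section Hyperplanes

variable {E : Type u} [NormedAddCommGroup E] [NormedSpace ℝ E]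

theorem eq_zero_of_eq_zero_off_ker_of_not_ker_le {F : Type*} [TopologicalSpace F] [T2Space F]
    [Zero F] {g : E → F} (hg : Continuous g)
    {ℓ₁ ℓ₂ : E →L[ℝ] ℝ} (hker : ¬ LinearMap.ker (ℓ₁ : E →ₗ[ℝ] ℝ) ≤ LinearMap.ker (ℓ₂ : E →ₗ[ℝ] ℝ))
    (h : ∀ x, ℓ₁ x = 0 → ℓ₂ x ≠ 0 → g x = 0) {x : E} (hx : ℓ₁ x = 0) : g x = 0 := by
  obtain ⟨w, hw₁, hw₂⟩ := SetLike.not_le_iff_exists.1 hker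
  simp only [LinearMap.mem_ker, ContinuousLinearMap.coe_coe] at hw₁ hw₂
  -- On the line `x + t • w` inside `ker ℓ₁`, `ℓ₂` vanishes only at `t = - ℓ₂ x / ℓ₂ w`.
  have hline : (fun t : ℝ => g (x + t • w)) = fun _ => 0 := by
    refine Continuous.ext_on (dense_compl_singleton (-ℓ₂ x / ℓ₂ w)) (by fun_prop)
      continuous_const fun t ht => h _ (by simp [hx, hw₁]) ?_
    rw [map_add, map_smul, smul_eq_mul]
    intro h0
    refine ht (eq_div_of_mul_eq hw₂ ?_)
    linarith
  simpa using congrFun hline 0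

theorem exists_contDiff_prod_smul_of_eq_zero_of_apply_eq_zero {F : Type u} [NormedAddCommGroup F]
    [NormedSpace ℝ F] [CompleteSpace F] {ι : Type*}
    (S : Finset ι) (ℓ : ι → E →L[ℝ] ℝ) (hℓ : ∀ i ∈ S, ℓ i ≠ 0)
    (hker : ∀ i ∈ S, ∀ j ∈ S, i ≠ j →
      ¬ LinearMap.ker (ℓ i : E →ₗ[ℝ] ℝ) ≤ LinearMap.ker (ℓ j : E →ₗ[ℝ] ℝ))
    {m : ℕ} {f : E → F} (hf : ContDiff ℝ (m + #S : ℕ) f)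
    (hzero : ∀ i ∈ S, ∀ x, ℓ i x = 0 → f x = 0) :
    ∃ g : E → F, ContDiff ℝ m g ∧ ∀ x, f x = (∏ i ∈ S, ℓ i x) • g x := by
  classical
  induction S using Finset.induction_on generalizing f with
  | empty => exact ⟨f, by simpa using hf, by simp⟩
  | @insert j S hj ih =>
    rw [card_insert_of_notMem hj, ← add_assoc] at hf
    obtain ⟨g₁, hg₁, hfg₁⟩ := exists_contDiff_smul_of_eq_zero_of_apply_eq_zero hf
      (hℓ j (mem_insert_self j S)) (hzero j (mem_insert_self j S))
    have hzero₁ : ∀ i ∈ S, ∀ x, ℓ i x = 0 → g₁ x = 0 := fun i hi x hx =>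
      eq_zero_of_eq_zero_off_ker_of_not_ker_le hg₁.continuous
        (hker i (mem_insert_of_mem hi) j (mem_insert_self j S) (ne_of_mem_of_not_mem hi hj))
        (fun y hy hjy => by
          simpa [hfg₁ y, hjy] using hzero i (mem_insert_of_mem hi) y hy) hx
    obtain ⟨g, hg, hfg⟩ := ih (fun i hi => hℓ i (mem_insert_of_mem hi))
      (fun i hi i' hi' => hker i (mem_insert_of_mem hi) i' (mem_insert_of_mem hi')) hg₁ hzero₁
    exact ⟨g, hg, fun x => by rw [hfg₁, hfg, prod_insert hj, mul_smul]⟩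

theorem ContinuousLinearMap.dense_setOf_apply_ne_zero {ℓ : E →L[ℝ] ℝ} (hℓ : ℓ ≠ 0) :
    Dense {x | ℓ x ≠ 0} := by
  have hcompl : {x | ℓ x ≠ 0} = (LinearMap.ker (ℓ : E →ₗ[ℝ] ℝ) : Set E)ᶜ := by ext; simp
  rw [hcompl, ← interior_eq_empty_iff_dense_compl, ← Set.not_nonempty_iff_eq_empty]
  intro hint
  exact hℓ (ContinuousLinearMap.coe_injective
    (LinearMap.ker_eq_top.mp ((LinearMap.ker _).eq_top_of_nonempty_interior' hint)))

theorem dense_setOf_prod_apply_ne_zero {ι : Type*} (S : Finset ι) (ℓ : ι → E →L[ℝ] ℝ)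
    (hℓ : ∀ i ∈ S, ℓ i ≠ 0) : Dense {x | ∏ i ∈ S, ℓ i x ≠ 0} := by
  have := (S.finite_toSet.image fun i => {x | ℓ i x ≠ 0}).dense_sInter
    (by simpa using fun i _ => isOpen_ne_fun (ℓ i).continuous continuous_const)
    (by simpa using fun i hi => (ℓ i).dense_setOf_apply_ne_zero (hℓ i hi))
  convert this using 1
  ext x
  simp [prod_ne_zero_iff]

end Hyperplanes

section Coordinates

variable {ι : Type*}

def coordSub (i j : ι) : (ι → ℝ) →L[ℝ] ℝ :=
  ContinuousLinearMap.proj (R := ℝ) (φ := fun _ => ℝ) j - ContinuousLinearMap.proj i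

@[simp]
theorem coordSub_apply (i j : ι) (x : ι → ℝ) : coordSub i j x = x j - x i := rfl

variable [DecidableEq ι]

theorem coordSub_ne_zero {i j : ι} (hij : i ≠ j) : coordSub i j ≠ 0 := fun h => by
  simpa [hij] using DFunLike.congr_fun h (Pi.single j 1)

theorem ker_coordSub_not_le [LinearOrder ι] {p q : ι × ι} (hp : p.1 < p.2) (hq : q.1 < q.2)
    (hpq : p ≠ q) :
    ¬ LinearMap.ker (coordSub p.1 p.2 : (ι → ℝ) →ₗ[ℝ] ℝ) ≤
      LinearMap.ker (coordSub q.1 q.2 : (ι → ℝ) →ₗ[ℝ] ℝ) := by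
  obtain ⟨k, hkq, hkp₁, hkp₂⟩ : ∃ k, (k = q.1 ∨ k = q.2) ∧ k ≠ p.1 ∧ k ≠ p.2 := by
    by_contra! h
    have h₁ := h q.1 (.inl rfl)
    have h₂ := h q.2 (.inr rfl)
    rcases eq_or_ne q.1 p.1 with e₁ | e₁
    · have e₂ : q.2 ≠ p.1 := e₁ ▸ hq.ne'
      exact hpq (Prod.ext e₁.symm (h₂ e₂).symm)
    · have e₂ : q.2 ≠ p.1 := (hp.trans (h₁ e₁ ▸ hq)).ne'
      exact hq.ne ((h₁ e₁).trans (h₂ e₂).symm)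
  refine SetLike.not_le_iff_exists.2 ⟨Pi.single k 1, ?_, ?_⟩ <;>
    simp only [LinearMap.mem_ker, ContinuousLinearMap.coe_coe, coordSub_apply]
  · simp [hkp₁.symm, hkp₂.symm]
  · rcases hkq with rfl | rfl <;> simp [hq.ne, hq.ne']

theorem eq_zero_of_apply_eq_of_antisymm [Fintype ι] {ψ : (ι → ℝ) → ℝ}
    (hanti : ∀ π : Equiv.Perm ι, ∀ x, ψ (x ∘ π) = ((Equiv.Perm.sign π : ℤ) : ℝ) * ψ x)
    {i j : ι} (hij : i ≠ j) {x : ι → ℝ} (hx : x i = x j) : ψ x = 0 := by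
  have hswap : x ∘ Equiv.swap i j = x := by
    funext k
    rcases eq_or_ne k i with rfl | hki
    · simp [hx]
    rcases eq_or_ne k j with rfl | hkj
    · simp [hx]
    · simp [Equiv.swap_apply_of_ne_of_ne hki hkj]
  have := hanti (Equiv.swap i j) x
  rw [hswap, Equiv.Perm.sign_swap hij] at this
  push_cast at this
  linarith

end Coordinates

section Vandermonde

open Matrix

theorem prod_filter_lt_sub_eq_det_vandermonde {R : Type*} [CommRing R] {n : ℕ} (x : Fin n → R) :
    ∏ p ∈ univ.filter (fun p : Fin n × Fin n => p.1 < p.2), (x p.2 - x p.1) =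
      (vandermonde x).det := by
  rw [det_vandermonde, prod_filter, Fintype.prod_prod_type]
  simp_rw [← prod_filter, filter_lt_eq_Ioi]

theorem det_vandermonde_comp_perm {R : Type*} [CommRing R] {n : ℕ} (π : Equiv.Perm (Fin n))
    (x : Fin n → R) :
    (vandermonde (x ∘ π)).det = Equiv.Perm.sign π * (vandermonde x).det := by
  rw [← det_permute]
  rfl

theorem dense_setOf_det_vandermonde_ne_zero (n : ℕ) :
    Dense {x : Fin n → ℝ | (vandermonde x).det ≠ 0} := by
  have := dense_setOf_prod_apply_ne_zero (univ.filter fun p : Fin n × Fin n => p.1 < p.2)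
    (fun p => coordSub p.1 p.2) fun p hp => coordSub_ne_zero (mem_filter.1 hp).2.ne
  simpa only [coordSub_apply, prod_filter_lt_sub_eq_det_vandermonde] using this

theorem comp_perm_eq_of_antisymm_eq_det_vandermonde_mul {n : ℕ} {ψ χ : (Fin n → ℝ) → ℝ}
    (hanti : ∀ π : Equiv.Perm (Fin n), ∀ x, ψ (x ∘ π) = ((Equiv.Perm.sign π : ℤ) : ℝ) * ψ x)
    (hχ : Continuous χ) (hfac : ∀ x, ψ x = (vandermonde x).det * χ x)
    (π : Equiv.Perm (Fin n)) (x : Fin n → ℝ) : χ (x ∘ π) = χ x := by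
  refine congrFun (Continuous.ext_on (dense_setOf_det_vandermonde_ne_zero n)
    (f := fun x => χ (x ∘ π)) (hχ.comp (by fun_prop)) hχ fun y hy => ?_) x
  have hsign : ((Equiv.Perm.sign π : ℤ) : ℝ) ≠ 0 := by
    rcases Int.units_eq_one_or (Equiv.Perm.sign π) with h | h <;> simp [h]
  have := hanti π y
  rw [hfac, hfac, det_vandermonde_comp_perm, ← mul_assoc] at this
  exact mul_left_cancel₀ (mul_ne_zero hsign hy) (by push_cast at this ⊢; exact this)

end Vandermonde

/-- If `ψ : ℝⁿ → ℝ` is antisymmetric and of class `C^{k + n(n-1)/2}`, then there is a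
symmetric function `χ` of class `C^k` with `ψ = Δ·χ`, where
`Δ(x) = ∏_{j<i} (xᵢ - xⱼ)`. -/
theorem antisymmetric_vandermonde_factor_smooth (n k : ℕ) (ψ : (Fin n → ℝ) → ℝ)
    (hanti : ∀ π : Equiv.Perm (Fin n), ∀ x : Fin n → ℝ,
      ψ (x ∘ π) = ((Equiv.Perm.sign π : ℤ) : ℝ) * ψ x)
    (hsmooth : ContDiff ℝ (k + n * (n - 1) / 2 : ℕ) ψ) :
    ∃ χ : (Fin n → ℝ) → ℝ,
      ContDiff ℝ (k : ℕ) χ ∧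
      (∀ π : Equiv.Perm (Fin n), ∀ x : Fin n → ℝ, χ (x ∘ π) = χ x) ∧
      ∀ x : Fin n → ℝ,
        ψ x = (∏ p ∈ Finset.univ.filter (fun p : Fin n × Fin n => p.1 < p.2),
          (x p.2 - x p.1)) * χ x := by
  set S := univ.filter fun p : Fin n × Fin n => p.1 < p.2
  have hS : ∀ p ∈ S, p.1 < p.2 := fun p hp => (mem_filter.1 hp).2
  have hcard : #S = n * (n - 1) / 2 := by
    rw [Fintype.card_product_filter_lt, Fintype.card_fin, Nat.choose_two_right]
  obtain ⟨χ, hχ, hfac⟩ := exists_contDiff_prod_smul_of_eq_zero_of_apply_eq_zero S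
    (fun p => coordSub p.1 p.2) (fun p hp => coordSub_ne_zero (hS p hp).ne)
    (fun p hp q hq hpq => ker_coordSub_not_le (hS p hp) (hS q hq) hpq) (hcard ▸ hsmooth)
    fun p hp x hx => eq_zero_of_apply_eq_of_antisymm hanti (hS p hp).ne (sub_eq_zero.1 hx).symm
  simp only [coordSub_apply, smul_eq_mul] at hfac
  refine ⟨χ, hχ, comp_perm_eq_of_antisymm_eq_det_vandermonde_mul hanti hχ.continuous
    fun x => ?_, hfac⟩
  rw [hfac, prod_filter_lt_sub_eq_det_vandermonde]
end

section
/- For every antisymmetric function ψ : (ℝ^d)ⁿ → ℝ there exist functions φ₁,…,φₙ : (ℝ^d)ⁿ → ℝ, each with φᵢ(x_j | x_{≠j}) symmetric in x_{≠j}, such that ψ(X) = det Φ(X) for all X = (x₁,…,xₙ) ∈ (ℝ^d)ⁿ, where Φ(X)_{j,i} := φᵢ(x_j | x_{≠j}). -/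
/-!
Fix any linear order on the vectors. Let `φᵢ(x | Y)` vanish unless exactly `i` entries of `Y` lie
below `x`, in which case it is `1`, except that `φ₀(x | Y)` is `ψ` at the increasingly sorted tuple
`(x, Y)`. For pairwise distinct `xⱼ`, `Φ(X)` is then the permutation matrix of the permutation
sorting `X`, with the entry `1` in column `0` replaced by `ψ(sorted X) = sgn · ψ(X)`; hence
`det Φ(X) = ψ(X)`. If two of the `xⱼ` coincide, `ψ(X) = 0` by antisymmetry and `Φ(X)` has two
equal rows.
-/

open Finset Equiv

variable {α R : Type*} {n : ℕ}

def IsAntisymmetricFun [CommRing R] (ψ : (Fin n → α) → R) : Prop :=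
  ∀ (π : Perm (Fin n)) (X : Fin n → α), ψ (X ∘ π) = ((Perm.sign π : ℤ) : R) * ψ X

theorem IsAntisymmetricFun.eq_zero_of_not_injective [CommRing R] [NoZeroDivisors R] [CharZero R]
    {ψ : (Fin n → α) → R} (hψ : IsAntisymmetricFun ψ) {X : Fin n → α} (hX : ¬ X.Injective) :
    ψ X = 0 := by
  obtain ⟨j, j', hXjj', hjj'⟩ := Function.not_injective_iff.mp hX
  have hswap : X ∘ swap j j' = X := by
    funext k
    simp only [Function.comp_apply, swap_apply_def]
    split_ifs <;> simp_all
  have h := hψ (swap j j') X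
  rw [hswap, Perm.sign_swap hjj'] at h
  exact CharZero.eq_neg_self_iff.mp (by simpa using h)

def slaterMatrix [Zero R] (φ : Fin (n + 1) → α × (Fin n → α) → R) (X : Fin (n + 1) → α) :
    Matrix (Fin (n + 1)) (Fin (n + 1)) R :=
  Matrix.of fun j i => φ i (X j, X ∘ j.succAbove)

theorem Fin.cons_apply_comp_succAbove (X : Fin (n + 1) → α) (j : Fin (n + 1)) :
    Fin.cons (X j) (X ∘ j.succAbove) = X ∘ j.cycleRange.symm := by
  funext i
  cases i using Fin.cases with
  | zero => simp [Fin.cycleRange_symm_zero]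
  | succ k => simp [Fin.cycleRange_symm_succ]

theorem Fin.cons_comp_perm (v : α) (Y : Fin n → α) (π : Perm (Fin n)) :
    Fin.cons v (Y ∘ π) = Fin.cons v Y ∘ Perm.decomposeFin.symm (0, π) := by
  funext i
  cases i using Fin.cases with
  | zero => simp [Perm.decomposeFin_symm_apply_zero]
  | succ k => simp [Perm.decomposeFin_symm_apply_succ]

section LinearOrder

variable [LinearOrder α]

def rankIn (v : α) (Y : Fin n → α) : ℕ := #{k | Y k < v}

theorem rankIn_comp_perm (v : α) (Y : Fin n → α) (π : Perm (Fin n)) :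
    rankIn v (Y ∘ π) = rankIn v Y :=
  card_equiv π (by simp)

theorem rankIn_comp_succAbove (X : Fin (n + 1) → α) (j : Fin (n + 1)) :
    rankIn (X j) (X ∘ j.succAbove) = rankIn (X j) X := by
  rw [rankIn, rankIn, card_filter, card_filter, Fin.sum_univ_succAbove _ j]
  simp

theorem rankIn_apply_sort {X : Fin n → α} (hX : X.Injective) (i : Fin n) :
    rankIn (X (Tuple.sort X i)) X = i := by
  have hmono : StrictMono (X ∘ Tuple.sort X) :=
    (Tuple.monotone_sort X).strictMono_of_injective (hX.comp (Tuple.sort X).injective)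
  rw [← rankIn_comp_perm _ _ (Tuple.sort X), rankIn]
  simp only [← Function.comp_apply (f := X), hmono.lt_iff_lt, filter_gt_eq_Iio, Fin.card_Iio]

variable [Zero R] [One R]

def slaterOrbital (ψ : (Fin (n + 1) → α) → R) (i : Fin (n + 1)) (p : α × (Fin n → α)) : R :=
  if rankIn p.1 p.2 = i then
    if i = 0 then ψ (Fin.cons p.1 p.2 ∘ Tuple.sort (Fin.cons p.1 p.2)) else 1
  else 0

theorem slaterOrbital_comp_perm (ψ : (Fin (n + 1) → α) → R) (i : Fin (n + 1)) (v : α)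
    (π : Perm (Fin n)) (Y : Fin n → α) :
    slaterOrbital ψ i (v, Y ∘ π) = slaterOrbital ψ i (v, Y) := by
  simp only [slaterOrbital, rankIn_comp_perm, Fin.cons_comp_perm,
    Tuple.comp_perm_comp_sort_eq_comp_sort]

theorem slaterOrbital_apply_succAbove (ψ : (Fin (n + 1) → α) → R) (i : Fin (n + 1))
    (X : Fin (n + 1) → α) (j : Fin (n + 1)) :
    slaterOrbital ψ i (X j, X ∘ j.succAbove) =
      if rankIn (X j) X = i then (if i = 0 then ψ (X ∘ Tuple.sort X) else 1) else 0 := by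
  simp only [slaterOrbital, rankIn_comp_succAbove, Fin.cons_apply_comp_succAbove,
    Tuple.comp_perm_comp_sort_eq_comp_sort]

theorem slaterMatrix_eq_submatrix_diagonal (ψ : (Fin (n + 1) → α) → R) {X : Fin (n + 1) → α}
    (hX : X.Injective) :
    slaterMatrix (slaterOrbital ψ) X =
      (Matrix.diagonal fun i => if i = 0 then ψ (X ∘ Tuple.sort X) else 1).submatrix
        (Tuple.sort X).symm id := by
  ext j i
  have hrank : rankIn (X j) X = (Tuple.sort X).symm j := by
    simpa using rankIn_apply_sort hX ((Tuple.sort X).symm j)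
  simp only [slaterMatrix, Matrix.of_apply, slaterOrbital_apply_succAbove, hrank, Fin.val_inj,
    Matrix.submatrix_apply, id, Matrix.diagonal_apply]
  split_ifs <;> simp_all

end LinearOrder

theorem det_slaterMatrix [LinearOrder α] [CommRing R] [NoZeroDivisors R] [CharZero R]
    {ψ : (Fin (n + 1) → α) → R} (hψ : IsAntisymmetricFun ψ) (X : Fin (n + 1) → α) :
    (slaterMatrix (slaterOrbital ψ) X).det = ψ X := by
  by_cases hX : X.Injective
  · rw [slaterMatrix_eq_submatrix_diagonal ψ hX, Matrix.det_permute, Matrix.det_diagonal,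
      Fin.prod_univ_succ]
    simp only [↓reduceIte, Fin.succ_ne_zero, prod_const_one, mul_one]
    rw [hψ _ X, Perm.sign_symm, ← mul_assoc, ← Int.cast_mul, ← Units.val_mul, Int.units_mul_self,
      Units.val_one, Int.cast_one, one_mul]
  · obtain ⟨j, j', hXjj', hjj'⟩ := Function.not_injective_iff.mp hX
    rw [hψ.eq_zero_of_not_injective hX]
    refine Matrix.det_zero_of_row_eq hjj' (funext fun i => ?_)
    simp only [slaterMatrix, Matrix.of_apply, slaterOrbital_apply_succAbove, hXjj']

theorem IsAntisymmetricFun.exists_generalized_slater [CommRing R] [NoZeroDivisors R] [CharZero R]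
    {ψ : (Fin (n + 1) → α) → R} (hψ : IsAntisymmetricFun ψ) :
    ∃ φ : Fin (n + 1) → α × (Fin n → α) → R,
      (∀ i v (π : Perm (Fin n)) Y, φ i (v, Y ∘ π) = φ i (v, Y)) ∧
      ∀ X : Fin (n + 1) → α, ψ X = (slaterMatrix φ X).det := by
  classical
  let : LinearOrder α := linearOrderOfSTO WellOrderingRel
  exact ⟨slaterOrbital ψ, slaterOrbital_comp_perm ψ, fun X => (det_slaterMatrix hψ X).symm⟩

/-- Every antisymmetric function `ψ : (ℝ^d)ⁿ → ℝ` (here `n = m+1 ≥ 1`) is a generalized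
Slater determinant `ψ(X) = det Φ(X)` with `Φ(X)_{j,i} = φᵢ(x_j | x_{≠j})`, where each
`φᵢ(x_j | x_{≠j})` is symmetric in the remaining vector arguments `x_{≠j}`. -/
theorem antisymmetric_generalized_slater_dDim (d m : ℕ)
    (ψ : (Fin (m + 1) → Fin d → ℝ) → ℝ)
    (hanti : ∀ π : Equiv.Perm (Fin (m + 1)), ∀ X : Fin (m + 1) → Fin d → ℝ,
      ψ (X ∘ π) = ((Equiv.Perm.sign π : ℤ) : ℝ) * ψ X) :
    ∃ φ : Fin (m + 1) → (Fin d → ℝ) × (Fin m → Fin d → ℝ) → ℝ,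
      (∀ i : Fin (m + 1), ∀ v : Fin d → ℝ, ∀ π : Equiv.Perm (Fin m),
        ∀ Y : Fin m → Fin d → ℝ, φ i (v, Y ∘ π) = φ i (v, Y)) ∧
      ∀ X : Fin (m + 1) → Fin d → ℝ,
        ψ X = Matrix.det (Matrix.of fun j i : Fin (m + 1) =>
          φ i (X j, fun k : Fin m => X (j.succAbove k))) :=
  IsAntisymmetricFun.exists_generalized_slater hanti
end
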